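/- Let A ∈ ℝ^{n×n}, B^m ∈ ℝ^{n×m}, B^p ∈ ℝ^{n×r}, C ∈ ℝ^{p×n}, and let U ∈ ℝ^{m×N}, W ∈ ℝ^{r×N}, X ∈ ℝ^{n×N} be data matrices such that [U; W; X] has full row rank m + r + n. Define Ẋ := A X + B^m U + B^p W and Y := C X. Then for every s ∈ ℂ, the rank over ℂ of the stacked matrix [s X − Ẋ; U; Y] (real data matrices complexified) equals m plus the rank over ℂ of the block matrix [[s I_n − A, −B^p], [C, 0]]. -/

import Mathlib

/-!
Substituting `Ẋ = A X + Bᵐ U + Bᵖ W` and `Y = C X`, the stacked matrix becomes `G D` with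
`D = [U; W; X]` and `G` a block matrix in `A, Bᵐ, Bᵖ, C, s`. Full row rank makes `D` right
invertible, and a right inverse survives complexification, so the rank is that of `G`. After
moving the `U`-rows to the top, `G` is block lower triangular with an identity block `I_m`;
clearing the block below it by a unimodular row operation leaves `I_m ⊕ [[sI - A, -Bᵖ], [C, 0]]`
up to a column permutation.
-/

open Matrix

theorem LinearMap.finrank_range_prodMap {K V W V' W' : Type*} [Field K]
    [AddCommGroup V] [AddCommGroup W] [AddCommGroup V'] [AddCommGroup W']
    [Module K V] [Module K W] [Module K V'] [Module K W'] [FiniteDimensional K V]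
    [FiniteDimensional K W] (f : V →ₗ[K] V') (g : W →ₗ[K] W') :
    Module.finrank K (LinearMap.range (f.prodMap g)) =
      Module.finrank K (LinearMap.range f) + Module.finrank K (LinearMap.range g) := by
  have hfactor : f.prodMap g = (f.range.subtype.prodMap g.range.subtype).comp
      (f.rangeRestrict.prodMap g.rangeRestrict) := rfl
  rw [hfactor, LinearMap.range_comp_of_range_eq_top, LinearMap.finrank_range_of_inj,
    Module.finrank_prod]
  · exact Prod.map_injective.mpr ⟨Subtype.val_injective, Subtype.val_injective⟩
  · rw [LinearMap.range_prodMap, LinearMap.range_rangeRestrict, LinearMap.range_rangeRestrict,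
      Submodule.prod_top]

namespace Matrix

variable {K : Type*} [Field K] {l m n o : Type*}

theorem rank_fromBlocks_zero_zero [Fintype n] [Fintype o] (A : Matrix l n K) (D : Matrix m o K) :
    (fromBlocks A 0 0 D).rank = A.rank + D.rank := by
  have hfactor : (fromBlocks A 0 0 D).mulVecLin =
      (LinearEquiv.sumArrowLequivProdArrow l m K K).symm.toLinearMap ∘ₗ
        (A.mulVecLin.prodMap D.mulVecLin) ∘ₗ
          (LinearEquiv.sumArrowLequivProdArrow n o K K).toLinearMap := by
    ext v (i | i) <;>
      simp [fromBlocks_mulVec, LinearEquiv.sumArrowLequivProdArrow, Equiv.sumArrowEquivProdArrow]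
  rw [Matrix.rank, hfactor, LinearMap.range_comp, LinearMap.range_comp, LinearEquiv.range,
    Submodule.map_top, LinearEquiv.finrank_map_eq, LinearMap.finrank_range_prodMap]
  rfl

theorem rank_fromBlocks_one_zero [Fintype m] [DecidableEq m] [Fintype l] [DecidableEq l]
    [Fintype o] (B : Matrix l m K) (D : Matrix l o K) :
    (fromBlocks (1 : Matrix m m K) 0 B D).rank = Fintype.card m + D.rank := by
  have hfactor : fromBlocks (1 : Matrix m m K) 0 B D =
      (fromBlocks 1 0 B 1 : Matrix (m ⊕ l) (m ⊕ l) K) *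
        (fromBlocks 1 0 0 D : Matrix (m ⊕ l) (m ⊕ o) K) := by
    simp [fromBlocks_multiply]
  have hunit : IsUnit (fromBlocks (1 : Matrix m m K) 0 B 1).det := by
    simp
  rw [hfactor, rank_mul_eq_right_of_isUnit_det _ _ hunit, rank_fromBlocks_zero_zero, rank_one]

theorem rank_mul_eq_left_of_mul_eq_one {R : Type*} [CommRing R] [StrongRankCondition R]
    [Fintype n] [Fintype o] [DecidableEq n]
    (G : Matrix l n R) {D : Matrix n o R} {E : Matrix o n R} (hDE : D * E = 1) :
    (G * D).rank = G.rank :=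
  le_antisymm (rank_mul_le_left G D) <| by
    simpa [Matrix.mul_assoc, hDE] using rank_mul_le_left (G * D) E

theorem exists_mul_eq_one_of_rank_eq_card_height [Fintype m] [DecidableEq m] [Fintype n]
    {D : Matrix m n K} (hD : D.rank = Fintype.card m) : ∃ E : Matrix n m K, D * E = 1 := by
  refine mulVec_surjective_iff_exists_right_inverse.mp ?_
  rw [← coe_mulVecLin, ← LinearMap.range_eq_top]
  refine Submodule.eq_top_of_finrank_eq ?_
  rw [← Matrix.rank, hD, Module.finrank_fintype_fun_eq_card]

theorem rank_fromRows_left_comm {m₁ m₂ m₃ : Type*} [Fintype n] (A : Matrix m₁ n K)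
    (B : Matrix m₂ n K) (C : Matrix m₃ n K) :
    (fromRows A (fromRows B C)).rank = (fromRows B (fromRows A C)).rank := by
  let e : m₂ ⊕ (m₁ ⊕ m₃) ≃ m₁ ⊕ (m₂ ⊕ m₃) := (Equiv.sumAssoc _ _ _).symm.trans
    (((Equiv.sumComm _ _).sumCongr (Equiv.refl _)).trans (Equiv.sumAssoc _ _ _))
  rw [← rank_submatrix (fromRows A (fromRows B C)) e (Equiv.refl n)]
  congr 1
  ext (_ | _ | _) _ <;> rfl

theorem map_ofReal_mul [Fintype n] (M : Matrix l n ℝ) (N : Matrix n o ℝ) :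
    (M * N).map Complex.ofReal = M.map Complex.ofReal * N.map Complex.ofReal :=
  Matrix.map_mul (f := Complex.ofRealHom)

end Matrix

theorem rank_data_eq_card_add_rank_rosenbrock {K : Type*} [Field K] {n m r p N : Type*}
    [Fintype n] [DecidableEq n] [Fintype m] [DecidableEq m] [Fintype r] [DecidableEq r]
    [Fintype p] [DecidableEq p] [Fintype N]
    (A : Matrix n n K) (Bm : Matrix n m K) (Bp : Matrix n r K) (C : Matrix p n K)
    (U : Matrix m N K) (W : Matrix r N K) (X : Matrix n N K) {E : Matrix N (m ⊕ (r ⊕ n)) K}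
    (hE : fromRows U (fromRows W X) * E = 1) (s : K) :
    (fromRows (s • X - (A * X + Bm * U + Bp * W)) (fromRows U (C * X))).rank =
      Fintype.card m + (fromBlocks (s • 1 - A) (-Bp) C 0).rank := by
  have hfactor : fromRows U (fromRows (s • X - (A * X + Bm * U + Bp * W)) (C * X)) =
      (fromBlocks 1 (0 : Matrix m (r ⊕ n) K) (fromRows (-Bm) 0)
        (fromBlocks (-Bp) (s • 1 - A) 0 C) : Matrix (m ⊕ (n ⊕ p)) (m ⊕ (r ⊕ n)) K) *
        fromRows U (fromRows W X) := by
    rw [fromBlocks_mul_fromRows, fromBlocks_mul_fromRows]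
    ext (i | i | i) j <;>
      simp only [fromRows_apply_inl, fromRows_apply_inr, fromRows_mul, Matrix.add_apply,
        Matrix.sub_apply, Matrix.smul_apply, Matrix.neg_apply, Matrix.zero_apply, Matrix.one_mul,
        Matrix.zero_mul, Matrix.neg_mul, Matrix.sub_mul, smul_mul, add_zero, zero_add]
    abel
  have hswap : fromBlocks (-Bp) (s • 1 - A) 0 C =
      (fromBlocks (s • 1 - A) (-Bp) C 0).submatrix (Equiv.refl _) (Equiv.sumComm _ _) := by
    ext (_ | _) (_ | _) <;> rfl
  rw [rank_fromRows_left_comm, hfactor, rank_mul_eq_left_of_mul_eq_one _ hE,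
    rank_fromBlocks_one_zero, hswap, rank_submatrix]

/-- For every `s ∈ ℂ`, the rank of the (complexified) stacked data matrix
`[sX − Ẋ; U; Y]` equals `m` plus the rank of the block matrix
`[[sI − A, −Bᵖ], [C, 0]]`. -/
theorem stmt10 {n m r pdim N : ℕ}
    (A : Matrix (Fin n) (Fin n) ℝ)
    (Bm : Matrix (Fin n) (Fin m) ℝ) (Bp : Matrix (Fin n) (Fin r) ℝ)
    (C : Matrix (Fin pdim) (Fin n) ℝ)
    (U : Matrix (Fin m) (Fin N) ℝ) (W : Matrix (Fin r) (Fin N) ℝ)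
    (X : Matrix (Fin n) (Fin N) ℝ)
    (hrank : (Matrix.fromRows U (Matrix.fromRows W X)).rank = m + r + n)
    (Xdot : Matrix (Fin n) (Fin N) ℝ) (hXdot : Xdot = A * X + Bm * U + Bp * W)
    (Y : Matrix (Fin pdim) (Fin N) ℝ) (hY : Y = C * X) :
    ∀ s : ℂ,
      (Matrix.fromRows (s • X.map Complex.ofReal - Xdot.map Complex.ofReal)
        (Matrix.fromRows (U.map Complex.ofReal) (Y.map Complex.ofReal))).rank =
      m + (Matrix.fromBlocks
        (s • (1 : Matrix (Fin n) (Fin n) ℂ) - A.map Complex.ofReal)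
        (-(Bp.map Complex.ofReal)) (C.map Complex.ofReal) 0).rank := by
  intro s
  -- Ranks over `ℝ` and `ℂ` are not compared directly: only the right inverse is transported.
  obtain ⟨E, hE⟩ := exists_mul_eq_one_of_rank_eq_card_height
    (hrank.trans (by simp only [Fintype.card_sum, Fintype.card_fin]; omega))
  have hEc : fromRows (U.map Complex.ofReal) (fromRows (W.map Complex.ofReal)
      (X.map Complex.ofReal)) * E.map Complex.ofReal = 1 := by
    rw [← fromRows_map, ← fromRows_map, ← map_ofReal_mul, hE,
      Matrix.map_one _ Complex.ofReal_zero Complex.ofReal_one]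
  subst hXdot hY
  simpa only [Matrix.map_add _ Complex.ofReal_add, map_ofReal_mul, Fintype.card_fin] using
    rank_data_eq_card_add_rank_rosenbrock (A.map Complex.ofReal) (Bm.map Complex.ofReal)
      (Bp.map Complex.ofReal) (C.map Complex.ofReal) _ _ _ hEc s
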